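/- The twisted-cube support C(c,ℓ) is closed in ℝ^n if and only if the constants c and ℓ satisfy condition (P). -/
import Mathlib


/-- The affine functions `A_j(x) = ℓ_j − Σ_{k>j} c_{jk} x_k` (for the top index the sum
is empty so `A_n = ℓ_n`). Indices are 0-based via `Fin n`. -/
def Afun (n : ℕ) (c : Fin n → Fin n → ℤ) (L : Fin n → ℤ) (j : Fin n) (x : Fin n → ℝ) : ℝ :=
  (L j : ℝ) - ∑ k ∈ Finset.univ.filter (fun k => j < k), (c j k : ℝ) * x k

/-- Condition (S-k): `A_k(x) < x_k < 0` or `0 ≤ x_k ≤ A_k(x)`. -/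
def Scond (n : ℕ) (c : Fin n → Fin n → ℤ) (L : Fin n → ℤ) (k : Fin n) (x : Fin n → ℝ) : Prop :=
  (Afun n c L k x < x k ∧ x k < 0) ∨ (0 ≤ x k ∧ x k ≤ Afun n c L k x)

/-- The twisted-cube support `C(c,ℓ)`. -/
def Cset (n : ℕ) (c : Fin n → Fin n → ℤ) (L : Fin n → ℤ) : Set (Fin n → ℝ) :=
  {x | ∀ k, Scond n c L k x}

/-- The polytope `P(c,ℓ) = {x : 0 ≤ x_j ≤ A_j(x) for all j}`. -/
def Pset (n : ℕ) (c : Fin n → Fin n → ℤ) (L : Fin n → ℤ) : Set (Fin n → ℝ) :=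
  {x | ∀ j, 0 ≤ x j ∧ x j ≤ Afun n c L j x}

/-- Condition (P): for each `k`, whenever the coordinates above `k` satisfy
`0 ≤ x_j ≤ A_j(x)`, one has `A_k(x) ≥ 0`. (For the top index this says `ℓ_n ≥ 0`.) -/
def CondP (n : ℕ) (c : Fin n → Fin n → ℤ) (L : Fin n → ℤ) : Prop :=
  ∀ k : Fin n, ∀ x : Fin n → ℝ,
    (∀ j : Fin n, k < j → 0 ≤ x j ∧ x j ≤ Afun n c L j x) →
    0 ≤ Afun n c L k x

/-- The Cartier data `m_σ` for a sign vector `σ` (`true` = `+`, `false` = `−`), defined by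
downward recursion: `m_{σ,j} = 0` if `σ_j = +`, and `m_{σ,j} = A_j(m_σ)` if `σ_j = −`. -/
noncomputable def mvec (n : ℕ) (c : Fin n → Fin n → ℤ) (L : Fin n → ℤ)
    (σ : Fin n → Bool) (j : Fin n) : ℝ :=
  if σ j then 0
  else (L j : ℝ) - ∑ k ∈ (Finset.univ.filter (fun k => j < k)).attach,
      (c j k.1 : ℝ) * mvec n c L σ k.1
termination_by n - j.1
decreasing_by
  have hk := Fin.lt_iff_val_lt_val.mp (Finset.mem_filter.mp k.2).2
  have := k.1.isLt
  omega

open Topology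

lemma Afun_congr (n : ℕ) (c : Fin n → Fin n → ℤ) (L : Fin n → ℤ) (j : Fin n)
    (x y : Fin n → ℝ) (h : ∀ k, j < k → x k = y k) :
    Afun n c L j x = Afun n c L j y := by
  unfold Afun
  congr 1
  refine Finset.sum_congr rfl fun k hk => ?_
  rw [h k (Finset.mem_filter.mp hk).2]

lemma continuous_Afun (n : ℕ) (c : Fin n → Fin n → ℤ) (L : Fin n → ℤ) (j : Fin n) :
    Continuous (Afun n c L j) := by
  unfold Afun
  exact continuous_const.sub (continuous_finset_sum _ fun k _ =>
    continuous_const.mul (continuous_apply k))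

noncomputable def extfun (n : ℕ) (c : Fin n → Fin n → ℤ) (L : Fin n → ℤ)
    (k : Fin n) (x : Fin n → ℝ) (t : ℝ) (j : Fin n) : ℝ :=
  if k < j then x j
  else if j = k then t
  else min ((L j : ℝ) - ∑ k' ∈ (Finset.univ.filter (fun k' => j < k')).attach,
      (c j k'.1 : ℝ) * extfun n c L k x t k'.1) 0 / 2
termination_by n - j.1
decreasing_by
  have hk := Fin.lt_iff_val_lt_val.mp (Finset.mem_filter.mp k'.2).2
  have := k'.1.isLt
  omega

lemma extfun_gt (n c L) (k : Fin n) (x t) {j : Fin n} (h : k < j) :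
    extfun n c L k x t j = x j := by
  rw [extfun]; simp [h]

lemma extfun_self (n c L) (k : Fin n) (x t) :
    extfun n c L k x t k = t := by
  rw [extfun]; simp

lemma extfun_lt (n c L) (k : Fin n) (x t) {j : Fin n} (h : j < k) :
    extfun n c L k x t j = min (Afun n c L j (extfun n c L k x t)) 0 / 2 := by
  rw [extfun]
  rw [if_neg (by exact fun hh => absurd (h.trans hh) (lt_irrefl _)), if_neg h.ne]
  unfold Afun
  rw [Finset.sum_attach _ (fun a => (c j a : ℝ) * extfun n c L k x t a)]

lemma continuous_extfun (n c L) (k : Fin n) (x : Fin n → ℝ) :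
    ∀ m, ∀ j : Fin n, n - j.1 ≤ m → Continuous (fun t => extfun n c L k x t j) := by
  intro m
  induction m with
  | zero => intro j hj; have := j.isLt; omega
  | succ m ih =>
    intro j hj
    rcases lt_trichotomy j k with h | h | h
    · have heq : (fun t => extfun n c L k x t j)
          = fun t => min ((L j : ℝ) - ∑ k' ∈ Finset.univ.filter (fun k' => j < k'),
              (c j k' : ℝ) * extfun n c L k x t k') 0 / 2 := by
        funext t; rw [extfun_lt n c L k x t h]; rfl
      rw [heq]
      refine Continuous.div_const (Continuous.min ?_ continuous_const) 2
      refine continuous_const.sub (continuous_finset_sum _ fun k' hk' =>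
        continuous_const.mul (ih k' ?_))
      have h1 : j < k' := (Finset.mem_filter.mp hk').2
      have h2 : j.1 < k'.1 := h1
      have := k'.isLt
      omega
    · subst h
      simp only [extfun_self]
      exact continuous_id
    · have heq : (fun t => extfun n c L k x t j) = fun _ => x j := by
        funext t; exact extfun_gt n c L k x t h
      rw [heq]; exact continuous_const

lemma extfun_mem_Cset (n c L) (k : Fin n) (x : Fin n → ℝ)
    (hup : ∀ j, k < j → 0 ≤ x j ∧ x j ≤ Afun n c L j x)
    (t : ℝ) (ht1 : Afun n c L k x < t) (ht2 : t < 0) :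
    extfun n c L k x t ∈ Cset n c L := by
  intro j
  rcases lt_trichotomy j k with h | h | h
  · rw [Scond, extfun_lt n c L k x t h]
    set b := Afun n c L j (extfun n c L k x t) with hb
    rcases le_or_gt 0 b with hb0 | hb0
    · right
      rw [min_eq_right hb0]
      norm_num [hb0]
    · left
      rw [min_eq_left hb0.le]
      constructor <;> linarith
  · subst h
    have hA : Afun n c L j (extfun n c L j x t) = Afun n c L j x :=
      Afun_congr _ _ _ _ _ _ (fun k' hk' => extfun_gt n c L j x t hk')
    rw [Scond, extfun_self, hA]
    exact Or.inl ⟨ht1, ht2⟩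
  · have hA : Afun n c L j (extfun n c L k x t) = Afun n c L j x :=
      Afun_congr _ _ _ _ _ _ (fun k' hk' => extfun_gt n c L k x t (h.trans hk'))
    rw [Scond, extfun_gt n c L k x t h, hA]
    exact Or.inr (hup j h)

lemma isClosed_Pset (n c L) : IsClosed (Pset n c L) := by
  have : Pset n c L = ⋂ j, ({x : Fin n → ℝ | 0 ≤ x j} ∩ {x | x j ≤ Afun n c L j x}) := by
    ext x
    simp only [Pset, Set.mem_iInter, Set.mem_inter_iff, Set.mem_setOf_eq]
  rw [this]
  exact isClosed_iInter fun j =>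
    (isClosed_le continuous_const (continuous_apply j)).inter
      (isClosed_le (continuous_apply j) (continuous_Afun n c L j))

lemma Cset_eq_Pset (n c L) (hP : CondP n c L) : Cset n c L = Pset n c L := by
  ext x
  constructor
  · intro hx
    have key : ∀ m, ∀ j : Fin n, n - j.1 ≤ m → 0 ≤ x j ∧ x j ≤ Afun n c L j x := by
      intro m
      induction m with
      | zero => intro j hj; have := j.isLt; omega
      | succ m ih =>
        intro j hj
        have hup : ∀ j' : Fin n, j < j' → 0 ≤ x j' ∧ x j' ≤ Afun n c L j' x := by
          intro j' hj'
          have h2 : j.1 < j'.1 := hj'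
          have := j'.isLt
          exact ih j' (by omega)
        have hA := hP j x hup
        rcases hx j with ⟨h1, h2⟩ | h
        · linarith
        · exact h
    exact fun j => key n j (by omega)
  · intro hx j
    exact Or.inr (hx j)

/-- `C(c,ℓ)` is closed iff `(c,ℓ)` satisfies condition (P). -/
theorem isClosed_Cset_iff_condP (n : ℕ) (hn : 0 < n)
    (c : Fin n → Fin n → ℤ) (L : Fin n → ℤ) :
    IsClosed (Cset n c L) ↔ CondP n c L := by
  constructor
  · intro hC
    by_contra hP
    rw [CondP] at hP
    push_neg at hP
    obtain ⟨k, x, hup, hA⟩ := hP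
    set a := Afun n c L k x with ha
    set y := extfun n c L k x a with hy
    have hcont : Continuous (fun t => extfun n c L k x t) :=
      continuous_pi fun j => continuous_extfun n c L k x n j (by omega)
    have hne : (𝓝[Set.Ioo a 0] a).NeBot := left_nhdsWithin_Ioo_neBot hA
    have htends : Filter.Tendsto (fun t => extfun n c L k x t) (𝓝[Set.Ioo a 0] a) (𝓝 y) :=
      (hcont.tendsto a).mono_left nhdsWithin_le_nhds
    have hev : ∀ᶠ t in 𝓝[Set.Ioo a 0] a, extfun n c L k x t ∈ Cset n c L :=
      Filter.eventually_of_mem self_mem_nhdsWithin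
        (fun t ht => extfun_mem_Cset n c L k x hup t ht.1 ht.2)
    have hymem : y ∈ Cset n c L := hC.mem_of_tendsto htends hev
    have hyk : y k = a := extfun_self n c L k x a
    have hAy : Afun n c L k y = a :=
      Afun_congr _ _ _ _ _ _ (fun k' hk' => extfun_gt n c L k x a hk')
    rcases hymem k with ⟨h1, _⟩ | ⟨h1, _⟩
    · rw [hyk, hAy] at h1; exact lt_irrefl a h1
    · rw [hyk] at h1; linarith
  · intro hP
    rw [Cset_eq_Pset n c L hP]
    exact isClosed_Pset n c L
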